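/- arXiv:2303.11265 — 2 statements merged into one kernel-verified Lean document; each statement's English description precedes it below -/
import Mathlib

section
/- Under the gradient flow θ'(t) = −(1/m) J(θ(t))ᵀ Aᵀ (y(t) − y) with y(t) = A g(θ(t)), if for all s ∈ [0,t] one has σ_min(J(θ(s))) ≥ σ_min(J(θ₀))/2 and y(s) − y ∈ ran(A), then ‖θ(t) − θ₀‖ ≤ (2/(σ_A σ_min(J(θ₀)))) ‖y(0) − y‖. -/
open MeasureTheory ProbabilityTheory Real

/-- Euclidean (ℓ²) norm of a real vector. -/
noncomputable def e2norm {ι : Type*} [Fintype ι] (x : ι → ℝ) : ℝ :=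
  Real.sqrt (∑ i, x i ^ 2)

/-- Operator (spectral) norm of a real matrix. -/
noncomputable def opN {α β : Type*} [Fintype α] [Fintype β]
    (M : Matrix α β ℝ) : ℝ :=
  sSup {c | ∃ x : β → ℝ, e2norm x = 1 ∧ c = e2norm (M.mulVec x)}

/-- Smallest singular value of a real matrix (as `inf` of `‖Mᵀ v‖` over unit vectors `v`). -/
noncomputable def sigmaMin {α β : Type*} [Fintype α] [Fintype β]
    (M : Matrix α β ℝ) : ℝ :=
  sInf {c | ∃ v : α → ℝ, e2norm v = 1 ∧ c = e2norm (M.transpose.mulVec v)}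

/-- Frobenius norm of a `k × d` array. -/
noncomputable def frobN {k d : ℕ} (W : Fin k → Fin d → ℝ) : ℝ :=
  Real.sqrt (∑ i, ∑ j, W i j ^ 2)

lemma e2norm_nonneg {ι : Type*} [Fintype ι] (x : ι → ℝ) : 0 ≤ e2norm x := Real.sqrt_nonneg _

lemma dot_self_nonneg {ι : Type*} [Fintype ι] (x : ι → ℝ) : 0 ≤ dotProduct x x :=
  Finset.sum_nonneg fun i _ => mul_self_nonneg _

lemma e2norm_eq_sqrt_dot {ι : Type*} [Fintype ι] (x : ι → ℝ) :
    e2norm x = Real.sqrt (dotProduct x x) := by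
  simp [e2norm, dotProduct, pow_two]

lemma sq_e2norm {ι : Type*} [Fintype ι] (x : ι → ℝ) :
    e2norm x ^ 2 = dotProduct x x := by
  rw [e2norm_eq_sqrt_dot, sq_sqrt (dot_self_nonneg x)]

lemma eq_zero_of_dot_self_eq_zero {ι : Type*} [Fintype ι] {x : ι → ℝ}
    (h : dotProduct x x = 0) : x = 0 := by
  funext i
  have := (Finset.sum_eq_zero_iff_of_nonneg (fun i _ => mul_self_nonneg (x i))).1 h i
    (Finset.mem_univ i)
  simpa [mul_self_eq_zero] using this

lemma e2norm_pos_of_ne {ι : Type*} [Fintype ι] {x : ι → ℝ} (h : x ≠ 0) : 0 < e2norm x := by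
  rw [e2norm_eq_sqrt_dot]
  apply Real.sqrt_pos.2
  rcases (dot_self_nonneg x).lt_or_eq with h1 | h1
  · exact h1
  · exact absurd (eq_zero_of_dot_self_eq_zero h1.symm) h

lemma e2norm_smul {ι : Type*} [Fintype ι] (c : ℝ) (x : ι → ℝ) :
    e2norm (c • x) = |c| * e2norm x := by
  simp only [e2norm, Pi.smul_apply, smul_eq_mul, mul_pow, ← Finset.mul_sum]
  rw [Real.sqrt_mul (sq_nonneg c), Real.sqrt_sq_eq_abs]

lemma norm_toE {ι : Type*} [Fintype ι] (x : ι → ℝ) :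
    ‖(EuclideanSpace.equiv ι ℝ).symm x‖ = e2norm x := by
  rw [EuclideanSpace.norm_eq, e2norm]
  congr 1
  apply Finset.sum_congr rfl
  intro i _
  rw [Real.norm_eq_abs, sq_abs]
  rfl

set_option maxHeartbeats 1000000 in
/-- If along the gradient flow the smallest singular value of the Jacobian stays
above `σ_min(J(θ₀))/2` on `[0,t]` and the residual stays in `ran A`, then the
parameters stay in a ball of radius `(2/(σ_A σ_min(J(θ₀)))) ‖y(0) - y‖`. -/
theorem parameters_stay_in_ball {m n p : ℕ} (hm : 0 < m)
    (A : Matrix (Fin m) (Fin n) ℝ) (y : Fin m → ℝ)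
    (g : (Fin p → ℝ) → Fin n → ℝ)
    (J : (Fin p → ℝ) → Matrix (Fin n) (Fin p) ℝ)
    (hg : ∀ θv : Fin p → ℝ,
      HasFDerivAt g (LinearMap.toContinuousLinearMap ((J θv).mulVecLin)) θv)
    (θ : ℝ → Fin p → ℝ) (θ₀ : Fin p → ℝ) (hθ0 : θ 0 = θ₀)
    (hflow : ∀ s : ℝ, HasDerivAt θ
      (-(1 / (m : ℝ)) •
        ((J (θ s)).transpose.mulVec
          (A.transpose.mulVec (A.mulVec (g (θ s)) - y)))) s)
    (σA : ℝ)
    (hσA : σA = sInf {c | ∃ w : Fin m → ℝ, (∃ x : Fin n → ℝ, w = A.mulVec x) ∧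
      w ≠ 0 ∧ c = e2norm (A.transpose.mulVec w) / e2norm w})
    (hσApos : 0 < σA) (hσ0 : 0 < sigmaMin (J θ₀))
    (t : ℝ) (ht : 0 ≤ t)
    (hmin : ∀ s, 0 ≤ s → s ≤ t → sigmaMin (J θ₀) / 2 ≤ sigmaMin (J (θ s)))
    (hran : ∀ s, 0 ≤ s → s ≤ t →
      ∃ x : Fin n → ℝ, A.mulVec (g (θ s)) - y = A.mulVec x) :
    e2norm (θ t - θ₀) ≤
      2 / (σA * sigmaMin (J θ₀)) * e2norm (A.mulVec (g θ₀) - y) := by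
  classical
  have hmpos : (0:ℝ) < m := by exact_mod_cast hm
  set σ0 : ℝ := sigmaMin (J θ₀) with hσ0def
  set lam : ℝ := σ0 * σA / 2 with hlamdef
  clear_value σ0
  have hlampos : 0 < lam := by rw [hlamdef]; positivity
  clear_value lam
  set r : ℝ → Fin m → ℝ := fun s => A.mulVec (g (θ s)) - y with hrdef
  set w : ℝ → Fin n → ℝ := fun s => A.transpose.mulVec (r s) with hwdef
  set z : ℝ → Fin p → ℝ := fun s => (J (θ s)).transpose.mulVec (w s) with hzdef
  have hflow' : ∀ s, HasDerivAt θ (-(1/(m:ℝ)) • z s) s := hflow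
  -- derivative of r
  have hrd : ∀ s, HasDerivAt r (A.mulVec ((J (θ s)).mulVec (-(1/(m:ℝ)) • z s))) s := by
    intro s
    have h1 : HasDerivAt (fun s => g (θ s)) ((J (θ s)).mulVec (-(1/(m:ℝ)) • z s)) s := by
      have := (hg (θ s)).comp_hasDerivAt s (hflow' s)
      simpa [Function.comp_def] using this
    have h2 := (Matrix.mulVecLin A).toContinuousLinearMap.hasFDerivAt.comp_hasDerivAt s h1
    simpa [Function.comp, hrdef] using h2.sub_const y
  -- u = squared norm of residual
  set u : ℝ → ℝ := fun s => dotProduct (r s) (r s) with hudef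
  have hud : ∀ s, HasDerivAt u (-(2/(m:ℝ)) * dotProduct (z s) (z s)) s := by
    intro s
    have hcomp := hasDerivAt_pi.1 (hrd s)
    have hsum : HasDerivAt u
        (∑ i, ((A.mulVec ((J (θ s)).mulVec (-(1/(m:ℝ)) • z s))) i * r s i
          + r s i * (A.mulVec ((J (θ s)).mulVec (-(1/(m:ℝ)) • z s))) i)) s := by
      apply HasDerivAt.fun_sum
      intro i _
      exact (hcomp i).mul (hcomp i)
    convert hsum using 1
    have hdot : ∀ v : Fin n → ℝ, dotProduct (r s) (A.mulVec v)
        = dotProduct (w s) v := by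
      intro v
      have hweq : A.transpose.mulVec (r s) = w s := rfl
      rw [Matrix.dotProduct_mulVec, ← hweq, Matrix.mulVec_transpose]
    have hdot2 : dotProduct (r s) (A.mulVec ((J (θ s)).mulVec (-(1/(m:ℝ)) • z s)))
        = -(1/(m:ℝ)) * dotProduct (z s) (z s) := by
      have hzeq : (J (θ s)).transpose.mulVec (w s) = z s := rfl
      rw [hdot, Matrix.dotProduct_mulVec, ← Matrix.mulVec_transpose, hzeq,
        dotProduct_smul]
      simp [smul_eq_mul]
    have hsymm : ∀ a b : Fin m → ℝ, dotProduct a b = dotProduct b a :=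
      fun a b => dotProduct_comm a b
    calc -(2/(m:ℝ)) * dotProduct (z s) (z s)
        = dotProduct (r s) (A.mulVec ((J (θ s)).mulVec (-(1/(m:ℝ)) • z s)))
          + dotProduct (r s) (A.mulVec ((J (θ s)).mulVec (-(1/(m:ℝ)) • z s))) := by
          rw [hdot2]; ring
      _ = _ := by
          simp only [dotProduct]
          rw [← Finset.sum_add_distrib]
          apply Finset.sum_congr rfl
          intro i _
          ring
  have hucont : Continuous u := by
    have : Differentiable ℝ u := fun s => (hud s).differentiableAt
    exact this.continuous
  have hantitone : Antitone u := by
    apply antitone_of_deriv_nonpos (fun s => (hud s).differentiableAt)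
    intro x
    rw [(hud x).deriv]
    have h1 := dot_self_nonneg (z x)
    have h2 : 0 < 2/(m:ℝ) := by positivity
    nlinarith
  have hunonneg : ∀ s, 0 ≤ u s := fun s => dot_self_nonneg (r s)
  -- key estimate
  have hkey : ∀ s, 0 ≤ s → s ≤ t → lam * e2norm (r s) ≤ e2norm (z s) := by
    intro s hs0 hst
    by_cases hrz : r s = 0
    · have hz0 : z s = 0 := by
        show (J (θ s)).transpose.mulVec (A.transpose.mulVec (r s)) = 0
        rw [hrz]; simp
      rw [hrz, hz0]
      simp [e2norm]
    · have hrpos := e2norm_pos_of_ne hrz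
      have hbddA : BddBelow {c | ∃ w' : Fin m → ℝ, (∃ x : Fin n → ℝ, w' = A.mulVec x) ∧
          w' ≠ 0 ∧ c = e2norm (A.transpose.mulVec w') / e2norm w'} := by
        refine ⟨0, ?_⟩
        rintro c ⟨w', -, -, rfl⟩
        exact div_nonneg (e2norm_nonneg _) (e2norm_nonneg _)
      have h1 : σA ≤ e2norm (w s) / e2norm (r s) := by
        rw [hσA]
        exact csInf_le hbddA ⟨r s, hran s hs0 hst, hrz, rfl⟩
      have h1' : σA * e2norm (r s) ≤ e2norm (w s) := (le_div_iff₀ hrpos).1 h1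
      have hwne : w s ≠ 0 := by
        intro h0
        rw [h0] at h1'
        have he0 : e2norm (0 : Fin n → ℝ) = 0 := by simp [e2norm]
        rw [he0] at h1'
        nlinarith
      have hwpos := e2norm_pos_of_ne hwne
      have hbddS : BddBelow {c | ∃ v : Fin n → ℝ, e2norm v = 1 ∧
          c = e2norm ((J (θ s)).transpose.mulVec v)} := by
        refine ⟨0, ?_⟩
        rintro c ⟨v, -, rfl⟩
        exact e2norm_nonneg _
      have h2 : sigmaMin (J (θ s)) ≤ e2norm (z s) / e2norm (w s) := by
        apply csInf_le hbddS
        refine ⟨(e2norm (w s))⁻¹ • w s, ?_, ?_⟩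
        · rw [e2norm_smul, abs_of_pos (inv_pos.2 hwpos)]
          field_simp
        · rw [Matrix.mulVec_smul, e2norm_smul, abs_of_pos (inv_pos.2 hwpos)]
          show e2norm (z s) / e2norm (w s) = _
          rw [div_eq_inv_mul]
      have h2' : sigmaMin (J (θ s)) * e2norm (w s) ≤ e2norm (z s) := (le_div_iff₀ hwpos).1 h2
      have h3 := hmin s hs0 hst
      calc lam * e2norm (r s) = (σ0/2) * (σA * e2norm (r s)) := by rw [hlamdef]; ring
        _ ≤ (σ0/2) * e2norm (w s) := by
            apply mul_le_mul_of_nonneg_left h1' (by positivity)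
        _ ≤ sigmaMin (J (θ s)) * e2norm (w s) :=
            mul_le_mul_of_nonneg_right h3 (e2norm_nonneg _)
        _ ≤ e2norm (z s) := h2'
  -- move to EuclideanSpace
  set toE := (EuclideanSpace.equiv (Fin p) ℝ).symm with htoEdef
  set Θ : ℝ → EuclideanSpace ℝ (Fin p) := fun s => toE (θ s) with hΘdef
  have hΘd : ∀ s, HasDerivAt Θ (toE (-(1/(m:ℝ)) • z s)) s := by
    intro s
    have := toE.hasFDerivAt.comp_hasDerivAt s (hflow' s)
    simpa [Function.comp_def] using this
  have hΘcont : Continuous Θ := by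
    have : Differentiable ℝ Θ := fun s => (hΘd s).differentiableAt
    exact this.continuous
  -- main bound with epsilon slack
  have hmain : ∀ ε : ℝ, 0 < ε → ‖Θ t - Θ 0‖ ≤ 1/lam * Real.sqrt (u 0) + ε * t := by
    intro ε hε
    set B : ℝ → ℝ := fun s => 1/lam * (Real.sqrt (u 0) - Real.sqrt (u s)) + ε * s with hBdef
    set B' : ℝ → ℝ := fun x =>
      (if u x = 0 then 0 else 1/lam * (2/(m:ℝ) * dotProduct (z x) (z x)
        / (2 * Real.sqrt (u x)))) + ε with hB'def
    have hBd : ∀ x ∈ Set.Ico (0:ℝ) t, HasDerivWithinAt B (B' x) (Set.Ici x) x := by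
      intro x _
      by_cases hux : u x = 0
      · have hconst : ∀ s' ∈ Set.Ici x, B s' = 1/lam * Real.sqrt (u 0) + ε * s' := by
          intro s' hs'
          have hus' : u s' = 0 := le_antisymm (hux ▸ hantitone hs') (hunonneg s')
          simp [hBdef, hus', Real.sqrt_zero]
        have haff : HasDerivWithinAt (fun s' => 1/lam * Real.sqrt (u 0) + ε * s')
            ε (Set.Ici x) x := by
          have h9 := ((hasDerivAt_const x (1/lam * Real.sqrt (u 0))).add
            ((hasDerivAt_id x).const_mul ε)).hasDerivWithinAt (s := Set.Ici x)
          rw [show (0:ℝ) + ε * 1 = ε by ring] at h9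
          exact h9
        have hres := haff.congr hconst (hconst x Set.self_mem_Ici)
        have hBx : B' x = ε := by simp [hB'def, hux]
        rw [hBx]
        exact hres
      · have hsq : HasDerivAt (fun s' => Real.sqrt (u s'))
            (1/(2 * Real.sqrt (u x)) * (-(2/(m:ℝ)) * dotProduct (z x) (z x))) x :=
          (Real.hasDerivAt_sqrt hux).comp x (hud x)
        have hd : HasDerivAt B (1/lam * (0 - 1/(2 * Real.sqrt (u x))
            * (-(2/(m:ℝ)) * dotProduct (z x) (z x))) + ε * 1) x :=
          (((hasDerivAt_const x (Real.sqrt (u 0))).sub hsq).const_mul (1/lam)).add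
            ((hasDerivAt_id x).const_mul ε)
        have heq : 1/lam * (0 - 1/(2 * Real.sqrt (u x))
            * (-(2/(m:ℝ)) * dotProduct (z x) (z x))) + ε * 1 = B' x := by
          simp only [hB'def, if_neg hux]
          ring
        rw [heq] at hd
        exact hd.hasDerivWithinAt
    have hbound : ∀ x ∈ Set.Ico (0:ℝ) t, ‖toE (-(1/(m:ℝ)) • z x)‖ ≤ B' x := by
      intro x hx
      have habs : |(-(1/(m:ℝ)))| = 1/(m:ℝ) := by
        rw [abs_neg, abs_of_pos (by positivity : (0:ℝ) < 1/(m:ℝ))]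
      have hnorm : ‖toE (-(1/(m:ℝ)) • z x)‖ = 1/(m:ℝ) * e2norm (z x) := by
        rw [htoEdef, norm_toE, e2norm_smul, habs]
      rw [hnorm]
      by_cases hux : u x = 0
      · have hrx : r x = 0 := eq_zero_of_dot_self_eq_zero hux
        have hzx : z x = 0 := by
          show (J (θ x)).transpose.mulVec (A.transpose.mulVec (r x)) = 0
          rw [hrx]; simp
        rw [hzx]
        have he0 : e2norm (0 : Fin p → ℝ) = 0 := by simp [e2norm]
        rw [he0]
        simp [hB'def, hux]
        linarith
      · have hupos : 0 < u x := lt_of_le_of_ne (hunonneg x) (Ne.symm hux)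
        have hRpos : 0 < Real.sqrt (u x) := Real.sqrt_pos.2 hupos
        have hReq : Real.sqrt (u x) = e2norm (r x) := (e2norm_eq_sqrt_dot (r x)).symm
        have hk := hkey x hx.1 (le_of_lt hx.2)
        have hZZ : dotProduct (z x) (z x) = e2norm (z x) ^ 2 := (sq_e2norm (z x)).symm
        simp only [hB'def, if_neg hux]
        rw [hZZ]
        have hZnn : 0 ≤ e2norm (z x) := e2norm_nonneg _
        have h1 : lam * Real.sqrt (u x) ≤ e2norm (z x) := by rw [hReq]; exact hk
        have h3 : 1/lam * (2/(m:ℝ) * e2norm (z x)^2 / (2 * Real.sqrt (u x)))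
            = e2norm (z x)^2 / (lam * m * Real.sqrt (u x)) := by
          field_simp
        have h4 : 1/(m:ℝ) * e2norm (z x) = e2norm (z x) / m := by ring
        rw [h3, h4]
        have h5 : e2norm (z x) / m ≤ e2norm (z x)^2 / (lam * m * Real.sqrt (u x)) := by
          rw [div_le_div_iff₀ hmpos (by positivity)]
          nlinarith [mul_le_mul_of_nonneg_right h1 hZnn]
        linarith
    have ha : ‖Θ 0 - Θ 0‖ ≤ B 0 := by simp [hBdef]
    have hfcont : ContinuousOn (fun s => Θ s - Θ 0) (Set.Icc 0 t) :=
      (hΘcont.sub continuous_const).continuousOn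
    have hfd : ∀ x ∈ Set.Ico (0:ℝ) t,
        HasDerivWithinAt (fun s => Θ s - Θ 0) (toE (-(1/(m:ℝ)) • z x)) (Set.Ici x) x :=
      fun x _ => ((hΘd x).sub_const _).hasDerivWithinAt
    have hBcont : ContinuousOn B (Set.Icc 0 t) := by
      apply Continuous.continuousOn
      exact (continuous_const.mul
        (continuous_const.sub (Real.continuous_sqrt.comp hucont))).add
        (continuous_const.mul continuous_id)
    have hfin := image_norm_le_of_norm_deriv_right_le_deriv_boundary'
      hfcont hfd ha hBcont hBd hbound (Set.right_mem_Icc.2 ht)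
    have hBt : B t ≤ 1/lam * Real.sqrt (u 0) + ε * t := by
      have h6 : 0 ≤ Real.sqrt (u t) := Real.sqrt_nonneg _
      have h7 : 0 < 1/lam := by positivity
      have h8 : 1/lam * (Real.sqrt (u 0) - Real.sqrt (u t)) ≤ 1/lam * Real.sqrt (u 0) :=
        mul_le_mul_of_nonneg_left (sub_le_self _ h6) h7.le
      simp only [hBdef]
      linarith
    exact hfin.trans hBt
  -- final assembly
  have hRHS : 2 / (σA * σ0) * e2norm (A.mulVec (g θ₀) - y) = 1/lam * Real.sqrt (u 0) := by
    have h0 : Real.sqrt (u 0) = e2norm (r 0) := (e2norm_eq_sqrt_dot (r 0)).symm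
    have hr0 : r 0 = A.mulVec (g θ₀) - y := by
      show A.mulVec (g (θ 0)) - y = _
      rw [hθ0]
    have hsc : 2/(σA*σ0) = 1/lam := by
      rw [hlamdef]
      have h1 := hσApos.ne'
      have h2 := hσ0.ne'
      field_simp
    rw [hsc, h0, hr0]
  have hLHS : e2norm (θ t - θ₀) = ‖Θ t - Θ 0‖ := by
    rw [← norm_toE (θ t - θ₀)]
    congr 1
    show toE (θ t - θ₀) = toE (θ t) - toE (θ 0)
    rw [hθ0, map_sub]
  rw [hLHS, hRHS]
  apply le_of_forall_pos_le_add
  intro δ hδ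
  rcases ht.eq_or_lt with h0 | hpos
  · have h1 := hmain 1 one_pos
    have h2 : (1:ℝ) * t = 0 := by rw [← h0]; ring
    linarith
  · have h1 := hmain (δ/t) (div_pos hδ hpos)
    have h2 : δ/t * t = δ := div_mul_cancel₀ δ hpos.ne'
    linarith
end

section
/- Let g(u,W) = (1/√k) V φ(W u) with V ∈ ℝ^{n×k} fixed, φ applied entrywise with |φ'| ≤ B, u ∈ ℝ^d with ‖u‖ = 1, and each column Vᵢ satisfying ‖Vᵢ‖_∞ ≤ D. Then the Jacobian J(W) of W ↦ g(u,W) satisfies ‖J(W) − J(W̃)‖ ≤ B D √(n/k) ‖W − W̃‖_F for all W, W̃ ∈ ℝ^{k×d}. -/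
open MeasureTheory ProbabilityTheory Real

/-- Two-layer network `g(u,W) = (1/√k) V φ(W u)`. -/
noncomputable def gnet {n k d : ℕ} (φ : ℝ → ℝ) (u : Fin d → ℝ)
    (V : Matrix (Fin n) (Fin k) ℝ) (W : Fin k → Fin d → ℝ) : Fin n → ℝ :=
  fun a => (1 / Real.sqrt k) * ∑ i, φ (∑ j, W i j * u j) * V a i

/-- Jacobian of `W ↦ g(u,W)`: the `(i,j)`-block column is `(1/√k) φ'(Wⁱu) Vᵢ uᵀ`. -/
noncomputable def Jnet {n k d : ℕ} (φ : ℝ → ℝ) (u : Fin d → ℝ)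
    (V : Matrix (Fin n) (Fin k) ℝ) (W : Fin k → Fin d → ℝ) :
    Matrix (Fin n) (Fin k × Fin d) ℝ :=
  Matrix.of fun a q =>
    (1 / Real.sqrt k) * deriv φ (∑ j, W q.1 j * u j) * V a q.1 * u q.2

set_option maxHeartbeats 1000000 in
/-- Lipschitz constant of the Jacobian of the two-layer network:
`‖J(W) - J(W̃)‖ ≤ B D √(n/k) ‖W - W̃‖_F`. -/
theorem jacobian_lipschitz {n k d : ℕ} (hk : 0 < k)
    (φ : ℝ → ℝ) (B D : ℝ) (hD : 0 ≤ D)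
    (hφ' : ∀ x : ℝ, |deriv φ x| ≤ B)
    (hφ'' : ∀ x y : ℝ, |deriv φ x - deriv φ y| ≤ B * |x - y|)
    (u : Fin d → ℝ) (hu : e2norm u = 1)
    (V : Matrix (Fin n) (Fin k) ℝ) (hV : ∀ a i, |V a i| ≤ D)
    (W W' : Fin k → Fin d → ℝ) :
    opN (Jnet φ u V W - Jnet φ u V W') ≤
      B * D * Real.sqrt ((n : ℝ) / (k : ℝ)) * frobN (W - W') := by
  have hB : 0 ≤ B := le_trans (abs_nonneg _) (hφ' 0)
  have hk0 : (0:ℝ) < (k:ℝ) := by exact_mod_cast hk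
  have hu2 : ∑ j, u j ^ 2 = 1 := by
    have h := hu
    unfold e2norm at h
    have h0 : (0:ℝ) ≤ ∑ j, u j ^ 2 := by positivity
    nlinarith [Real.sq_sqrt h0]
  set Δ : Fin k → Fin d → ℝ := fun i j => W i j - W' i j with hΔ
  set δ : Fin k → ℝ := fun i =>
    deriv φ (∑ j, W i j * u j) - deriv φ (∑ j, W' i j * u j) with hδ
  have hδ2 : ∀ i, δ i ^ 2 ≤ B ^ 2 * ∑ j, Δ i j ^ 2 := by
    intro i
    have e : (∑ j, W i j * u j) - (∑ j, W' i j * u j) = ∑ j, Δ i j * u j := by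
      rw [← Finset.sum_sub_distrib]
      exact Finset.sum_congr rfl (fun j _ => by simp [hΔ]; ring)
    have h1 : |δ i| ≤ B * |∑ j, Δ i j * u j| := by
      simpa [hδ, e] using hφ'' (∑ j, W i j * u j) (∑ j, W' i j * u j)
    have h2 : (∑ j, Δ i j * u j) ^ 2 ≤ (∑ j, Δ i j ^ 2) * ∑ j, u j ^ 2 :=
      Finset.sum_mul_sq_le_sq_mul_sq _ _ _
    rw [hu2, mul_one] at h2
    nlinarith [sq_abs (δ i), sq_abs (∑ j, Δ i j * u j), abs_nonneg (δ i),
      abs_nonneg (∑ j, Δ i j * u j)]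
  set C := B * D * Real.sqrt ((n : ℝ) / (k : ℝ)) * frobN (W - W') with hCdef
  have hF : frobN (W - W') = Real.sqrt (∑ i, ∑ j, Δ i j ^ 2) := by
    unfold frobN; simp [hΔ]
  have hC : 0 ≤ C := by
    rw [hCdef, hF]; positivity
  apply Real.sSup_le _ hC
  rintro c ⟨x, hx, rfl⟩
  have hx2 : ∑ q, x q ^ 2 = 1 := by
    have h := hx
    unfold e2norm at h
    have h0 : (0:ℝ) ≤ ∑ q, x q ^ 2 := by positivity
    nlinarith [Real.sq_sqrt h0]
  set M := Jnet φ u V W - Jnet φ u V W' with hM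
  have hMentry : ∀ a q, M a q = (1 / Real.sqrt k) * δ q.1 * V a q.1 * u q.2 := by
    intro a q
    simp only [hM, Matrix.sub_apply, Jnet, Matrix.of_apply, hδ]
    ring
  have hkk : (1 / Real.sqrt k) ^ 2 = 1 / (k:ℝ) := by
    rw [div_pow, one_pow, Real.sq_sqrt hk0.le]
  have key : ∑ a, (M.mulVec x a) ^ 2 ≤ C ^ 2 := by
    have step1 : ∀ a, (M.mulVec x a) ^ 2 ≤ ∑ q, M a q ^ 2 := by
      intro a
      have h2 : (∑ q, M a q * x q) ^ 2 ≤ (∑ q, M a q ^ 2) * ∑ q, x q ^ 2 :=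
        Finset.sum_mul_sq_le_sq_mul_sq _ _ _
      rw [hx2, mul_one] at h2
      simpa [Matrix.mulVec, dotProduct] using h2
    have step2 : ∑ a, (M.mulVec x a) ^ 2 ≤ ∑ a : Fin n, ∑ q : Fin k × Fin d, M a q ^ 2 :=
      Finset.sum_le_sum fun a _ => step1 a
    have step3 : ∑ a : Fin n, ∑ q : Fin k × Fin d, M a q ^ 2
        ≤ ∑ _a : Fin n, ∑ i : Fin k, ∑ j : Fin d,
            (1 / (k:ℝ)) * (B ^ 2 * ∑ j', Δ i j' ^ 2) * D ^ 2 * u j ^ 2 := by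
      apply Finset.sum_le_sum
      intro a _
      rw [Fintype.sum_prod_type]
      apply Finset.sum_le_sum; intro i _
      apply Finset.sum_le_sum; intro j _
      rw [hMentry a (i, j)]
      have hV2 : V a i ^ 2 ≤ D ^ 2 := by
        have := hV a i
        nlinarith [sq_abs (V a i), abs_nonneg (V a i)]
      have expand : ((1 / Real.sqrt k) * δ i * V a i * u j) ^ 2
          = (1 / (k:ℝ)) * δ i ^ 2 * V a i ^ 2 * u j ^ 2 := by
        rw [← hkk]; ring
      rw [expand]
      gcongr (1 / (k:ℝ)) * ?_ * ?_ * u j ^ 2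
      all_goals first | exact hδ2 i | exact hV2 | positivity
    have step4 : ∑ _a : Fin n, ∑ i : Fin k, ∑ j : Fin d,
            (1 / (k:ℝ)) * (B ^ 2 * ∑ j', Δ i j' ^ 2) * D ^ 2 * u j ^ 2
        = (n:ℝ) * ((1 / (k:ℝ)) * B ^ 2 * D ^ 2 * (∑ i, ∑ j', Δ i j' ^ 2)) := by
      rw [Finset.sum_const, Finset.card_univ, Fintype.card_fin, nsmul_eq_mul]
      congr 1
      rw [Finset.mul_sum]
      apply Finset.sum_congr rfl
      intro i _
      rw [← Finset.mul_sum, hu2]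
      ring
    have hC2 : C ^ 2 = (n:ℝ) * ((1 / (k:ℝ)) * B ^ 2 * D ^ 2 * (∑ i, ∑ j', Δ i j' ^ 2)) := by
      rw [hCdef, hF]
      have h1 : Real.sqrt ((n : ℝ) / (k : ℝ)) ^ 2 = (n:ℝ) / (k:ℝ) :=
        Real.sq_sqrt (by positivity)
      have h2 : Real.sqrt (∑ i, ∑ j, Δ i j ^ 2) ^ 2 = ∑ i, ∑ j, Δ i j ^ 2 :=
        Real.sq_sqrt (by positivity)
      rw [mul_pow, mul_pow, mul_pow, h1, h2]
      field_simp
    calc ∑ a, (M.mulVec x a) ^ 2 ≤ _ := step2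
      _ ≤ _ := step3
      _ = _ := step4
      _ = C ^ 2 := hC2.symm
  unfold e2norm
  calc Real.sqrt (∑ a, (M.mulVec x a) ^ 2) ≤ Real.sqrt (C ^ 2) :=
        Real.sqrt_le_sqrt key
    _ = C := Real.sqrt_sq hC
end
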